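/- Let 2 ≤ n ≤ N, z_1,…,z_N ∈ ℂ with |z_j| ≤ 1 for all j, z̃ = (1/N)∑_{j=1}^N z_j, and E_{[N],n} = ∑_{J⊆[N], |J|=n} ∏_{j∈J} z_j. Then |E_{[N],n}/C(N,n) − z̃^n| ≤ (n(n−1)/(N(N−1))) · (∑_{j=1}^N |z_j − z̃|²) · min(1/2, 1/(n(1−|z̃|))), where C(N,n) is the binomial coefficient. -/

import Mathlib

open Finset

variable {N : ℕ}

noncomputable def Esym (z : Fin N → ℂ) (S : Finset (Fin N)) (m : ℕ) : ℂ :=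
  ∑ J ∈ S.powersetCard m, ∏ j ∈ J, z j

lemma Esym_zero (z : Fin N → ℂ) (S : Finset (Fin N)) : Esym z S 0 = 1 := by
  simp [Esym]

lemma Esym_one (z : Fin N → ℂ) (S : Finset (Fin N)) : Esym z S 1 = ∑ j ∈ S, z j := by
  simp [Esym, powersetCard_one, Finset.sum_map]

lemma abs_Esym_le (z : Fin N → ℂ) (hz : ∀ j, ‖z j‖ ≤ 1)
    (S : Finset (Fin N)) (m : ℕ) :
    ‖Esym z S m‖ ≤ (S.card.choose m : ℝ) := by
  calc ‖Esym z S m‖ ≤ ∑ J ∈ S.powersetCard m, ‖∏ j ∈ J, z j‖ := by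
        exact norm_sum_le _ _
    _ ≤ ∑ J ∈ S.powersetCard m, 1 := by
        refine Finset.sum_le_sum fun J _ => ?_
        rw [norm_prod]
        exact Finset.prod_le_one (fun j _ => norm_nonneg _) (fun j _ => hz j)
    _ = (S.card.choose m : ℝ) := by simp [Finset.card_powersetCard]

lemma Esym_insert (z : Fin N → ℂ) {S : Finset (Fin N)} {i : Fin N} (hi : i ∉ S) (m : ℕ) :
    Esym z (insert i S) (m + 1) = Esym z S (m + 1) + z i * Esym z S m := by
  unfold Esym
  rw [powersetCard_succ_insert hi, Finset.sum_union, Finset.sum_image, Finset.mul_sum]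
  · congr 1
    refine Finset.sum_congr rfl fun J hJ => ?_
    rw [Finset.prod_insert]
    exact fun h => hi ((mem_powersetCard.1 hJ).1 h)
  · intro a ha b hb hab
    have ha' : i ∉ a := fun h => hi ((mem_powersetCard.1 ha).1 h)
    have hb' : i ∉ b := fun h => hi ((mem_powersetCard.1 hb).1 h)
    rw [← Finset.erase_insert ha', ← Finset.erase_insert hb', hab]
  · rw [Finset.disjoint_right]
    intro J hJ hJ'
    obtain ⟨K, hK, rfl⟩ := Finset.mem_image.1 hJ
    exact (fun h => hi ((mem_powersetCard.1 hJ').1 h)) (mem_insert_self i K)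

lemma Esym_erase (z : Fin N → ℂ) {S : Finset (Fin N)} {i : Fin N} (hi : i ∈ S) (m : ℕ) :
    Esym z S (m + 1) = Esym z (S.erase i) (m + 1) + z i * Esym z (S.erase i) m := by
  conv_lhs => rw [← Finset.insert_erase hi]
  exact Esym_insert z (Finset.notMem_erase i S) m

lemma powersetCard_erase_eq (S : Finset (Fin N)) (j : Fin N) (m : ℕ) :
    (S.erase j).powersetCard m = (S.powersetCard m).filter (fun J => j ∉ J) := by
  ext J
  simp only [mem_powersetCard, mem_filter, Finset.subset_erase]
  tauto

lemma sum_Esym_erase (z : Fin N → ℂ) (S : Finset (Fin N)) (m : ℕ) :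
    ∑ j ∈ S, Esym z (S.erase j) m = ((S.card - m : ℕ) : ℂ) * Esym z S m := by
  classical
  unfold Esym
  simp only [powersetCard_erase_eq, Finset.sum_filter]
  rw [Finset.sum_comm, Finset.mul_sum]
  refine Finset.sum_congr rfl fun J hJ => ?_
  obtain ⟨hJS, hJc⟩ := mem_powersetCard.1 hJ
  rw [Finset.sum_ite, Finset.sum_const, Finset.sum_const, smul_zero, add_zero,
    Finset.filter_not, Finset.filter_mem_eq_inter, Finset.inter_eq_right.2 hJS,
    Finset.card_sdiff_of_subset hJS, nsmul_eq_mul, hJc]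

lemma sum_z_Esym_erase (z : Fin N → ℂ) (S : Finset (Fin N)) (m : ℕ) (hm : m + 1 ≤ S.card) :
    ∑ j ∈ S, z j * Esym z (S.erase j) m = ((m + 1 : ℕ) : ℂ) * Esym z S (m + 1) := by
  classical
  have key : (S.card : ℂ) * Esym z S (m + 1) =
      ∑ j ∈ S, (Esym z (S.erase j) (m + 1) + z j * Esym z (S.erase j) m) := by
    rw [Finset.sum_congr rfl (fun j (hj : j ∈ S) => (Esym_erase z hj m).symm)]
    simp [Finset.sum_const, nsmul_eq_mul]
  rw [Finset.sum_add_distrib, sum_Esym_erase] at key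
  have h2 : ((S.card - (m+1) : ℕ) : ℂ) = (S.card : ℂ) - ((m+1 : ℕ) : ℂ) := by
    rw [Nat.cast_sub hm]
  rw [h2] at key
  push_cast at key ⊢
  linear_combination (-1 : ℂ) * key

lemma Esym_erase_sub (z : Fin N → ℂ) {S : Finset (Fin N)} {i j : Fin N}
    (hi : i ∈ S) (hj : j ∈ S) (hij : i ≠ j) (m : ℕ) :
    Esym z (S.erase j) (m + 1) - Esym z (S.erase i) (m + 1)
      = (z i - z j) * Esym z ((S.erase i).erase j) m := by
  have hi' : i ∈ S.erase j := Finset.mem_erase.2 ⟨hij, hi⟩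
  have hj' : j ∈ S.erase i := Finset.mem_erase.2 ⟨hij.symm, hj⟩
  rw [Esym_erase z hi' m, Esym_erase z hj' m, Finset.erase_right_comm]
  ring

lemma key_identity (z : Fin N → ℂ) (zt : ℂ) (hzt : ∑ j : Fin N, (z j - zt) = 0) (m : ℕ) :
    2 * (N : ℂ) * ∑ j : Fin N, (z j - zt) * Esym z (univ.erase j) (m + 1)
      = - ∑ i : Fin N, ∑ j : Fin N, (z i - z j) ^ 2 * Esym z ((univ.erase i).erase j) m := by
  classical
  set g : Fin N → ℂ := fun j => Esym z (univ.erase j) (m + 1) with hg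
  set P : ℂ := ∑ j : Fin N, (z j - zt) * g j with hP
  have card_univ' : ((univ : Finset (Fin N)).card : ℂ) = (N : ℂ) := by simp
  have step1 : (N : ℂ) * P = ∑ i : Fin N, ∑ j : Fin N, (z j - zt) * (g j - g i) := by
    have : ∀ i : Fin N, ∑ j : Fin N, (z j - zt) * (g j - g i) = P := by
      intro i
      have : ∑ j : Fin N, (z j - zt) * (g j - g i)
          = ∑ j : Fin N, ((z j - zt) * g j - (z j - zt) * g i) := by
        refine Finset.sum_congr rfl fun j _ => by ring
      rw [this, Finset.sum_sub_distrib, ← Finset.sum_mul, hzt, zero_mul, sub_zero, hP]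
    rw [Finset.sum_congr rfl fun i _ => this i, Finset.sum_const, nsmul_eq_mul]
    simp
  have step2 : (N : ℂ) * P = ∑ i : Fin N, ∑ j : Fin N, (z i - zt) * (g i - g j) := by
    rw [step1, Finset.sum_comm]
  have step3 : 2 * (N : ℂ) * P
      = ∑ i : Fin N, ∑ j : Fin N, (z j - z i) * (g j - g i) := by
    have : ∀ i j : Fin N, (z j - zt) * (g j - g i) + (z i - zt) * (g i - g j)
        = (z j - z i) * (g j - g i) := fun i j => by ring
    calc 2 * (N : ℂ) * P = (N : ℂ) * P + (N : ℂ) * P := by ring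
      _ = (∑ i : Fin N, ∑ j : Fin N, (z j - zt) * (g j - g i))
            + ∑ i : Fin N, ∑ j : Fin N, (z i - zt) * (g i - g j) := by
          rw [← step1, ← step2]
      _ = ∑ i : Fin N, ∑ j : Fin N,
            ((z j - zt) * (g j - g i) + (z i - zt) * (g i - g j)) := by
          rw [← Finset.sum_add_distrib]
          refine Finset.sum_congr rfl fun i _ => ?_
          rw [← Finset.sum_add_distrib]
      _ = _ := by
          refine Finset.sum_congr rfl fun i _ => Finset.sum_congr rfl fun j _ => this i j
  rw [step3, ← Finset.sum_neg_distrib]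
  refine Finset.sum_congr rfl fun i _ => ?_
  rw [← Finset.sum_neg_distrib]
  refine Finset.sum_congr rfl fun j _ => ?_
  by_cases hij : i = j
  · subst hij; ring
  · rw [hg]
    have := Esym_erase_sub z (Finset.mem_univ i) (Finset.mem_univ j) hij m
    simp only []
    rw [this]
    ring

lemma sum_sum_abs_sq (z : Fin N → ℂ) (zt : ℂ) (hzt : ∑ j : Fin N, (z j - zt) = 0) :
    ∑ i : Fin N, ∑ j : Fin N, ‖z i - z j‖ ^ 2
      = 2 * (N : ℝ) * ∑ j : Fin N, ‖z j - zt‖ ^ 2 := by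
  classical
  set w : Fin N → ℂ := fun j => z j - zt with hw
  set s : ℝ := ∑ j : Fin N, ‖z j - zt‖ ^ 2 with hs
  have hconj : ∑ j : Fin N, (starRingEnd ℂ) (w j) = 0 := by
    rw [← map_sum]; rw [hzt]; simp
  have expand : ∀ i j : Fin N, ‖z i - z j‖ ^ 2
      = ‖w i‖ ^ 2 + ‖w j‖ ^ 2
        - 2 * (w i * (starRingEnd ℂ) (w j)).re := by
    intro i j
    have h1 : z i - z j = w i - w j := by simp [hw]
    rw [h1, Complex.sq_norm, Complex.sq_norm, Complex.sq_norm, Complex.normSq_sub]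
  have inner : ∀ i : Fin N, ∑ j : Fin N, ‖z i - z j‖ ^ 2
      = (N : ℝ) * ‖w i‖ ^ 2 + s := by
    intro i
    rw [Finset.sum_congr rfl fun j _ => expand i j]
    rw [Finset.sum_sub_distrib, Finset.sum_add_distrib]
    have h2 : ∑ j : Fin N, (2 * (w i * (starRingEnd ℂ) (w j)).re)
        = 2 * ((w i * ∑ j : Fin N, (starRingEnd ℂ) (w j)).re) := by
      rw [Finset.mul_sum, Complex.re_sum, Finset.mul_sum]
    rw [h2, hconj, mul_zero, Complex.zero_re, mul_zero, sub_zero,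
      Finset.sum_const, Finset.card_univ, Fintype.card_fin, nsmul_eq_mul]
  rw [Finset.sum_congr rfl fun i _ => inner i, Finset.sum_add_distrib,
    Finset.sum_const, Finset.card_univ, Fintype.card_fin, nsmul_eq_mul,
    ← Finset.mul_sum]
  ring

lemma key_bound (z : Fin N → ℂ) (hz : ∀ j, ‖z j‖ ≤ 1) (zt : ℂ)
    (hzt0 : ∑ j : Fin N, (z j - zt) = 0) (m : ℕ) (hm : m + 2 ≤ N) :
    ‖∑ j : Fin N, (z j - zt) * Esym z (univ.erase j) (m + 1)‖
      ≤ (∑ j : Fin N, ‖z j - zt‖ ^ 2) * ((N - 2).choose m : ℝ) := by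
  classical
  have hNpos : (0 : ℝ) < (N : ℝ) := by
    have : 0 < N := by omega
    exact_mod_cast this
  set P : ℂ := ∑ j : Fin N, (z j - zt) * Esym z (univ.erase j) (m + 1) with hP
  set s : ℝ := ∑ j : Fin N, ‖z j - zt‖ ^ 2 with hs
  have hkey := key_identity z zt hzt0 m
  have habs : 2 * (N : ℝ) * ‖P‖
      = ‖∑ i : Fin N, ∑ j : Fin N,
          (z i - z j) ^ 2 * Esym z ((univ.erase i).erase j) m‖ := by
    conv_rhs => rw [← norm_neg, ← hkey]
    rw [norm_mul, norm_mul, Complex.norm_two, Complex.norm_natCast, hP]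
  have hbound : ‖∑ i : Fin N, ∑ j : Fin N,
        (z i - z j) ^ 2 * Esym z ((univ.erase i).erase j) m‖
      ≤ 2 * (N : ℝ) * s * ((N - 2).choose m : ℝ) := by
    have step : ∀ i j : Fin N,
        ‖(z i - z j) ^ 2 * Esym z ((univ.erase i).erase j) m‖
          ≤ ‖z i - z j‖ ^ 2 * ((N - 2).choose m : ℝ) := by
      intro i j
      rw [norm_mul, norm_pow]
      by_cases hij : i = j
      · subst hij; simp
      · refine mul_le_mul_of_nonneg_left ?_ (by positivity)
        have hji : j ∈ univ.erase i :=
          Finset.mem_erase.2 ⟨fun h => hij h.symm, Finset.mem_univ j⟩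
        have hcard : ((univ.erase i).erase j).card = N - 2 := by
          rw [Finset.card_erase_of_mem hji, Finset.card_erase_of_mem (Finset.mem_univ i),
            Finset.card_univ, Fintype.card_fin]
          omega
        have := abs_Esym_le z hz ((univ.erase i).erase j) m
        rwa [hcard] at this
    calc ‖∑ i : Fin N, ∑ j : Fin N,
          (z i - z j) ^ 2 * Esym z ((univ.erase i).erase j) m‖
        ≤ ∑ i : Fin N, ∑ j : Fin N,
            ‖(z i - z j) ^ 2 * Esym z ((univ.erase i).erase j) m‖ := by
          refine (norm_sum_le _ _).trans ?_
          exact Finset.sum_le_sum fun i _ => norm_sum_le _ _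
      _ ≤ ∑ i : Fin N, ∑ j : Fin N,
            ‖z i - z j‖ ^ 2 * ((N - 2).choose m : ℝ) := by
          exact Finset.sum_le_sum fun i _ => Finset.sum_le_sum fun j _ => step i j
      _ = (∑ i : Fin N, ∑ j : Fin N, ‖z i - z j‖ ^ 2)
            * ((N - 2).choose m : ℝ) := by
          rw [Finset.sum_mul]
          exact Finset.sum_congr rfl fun i _ => (Finset.sum_mul _ _ _).symm
      _ = 2 * (N : ℝ) * s * ((N - 2).choose m : ℝ) := by
          rw [sum_sum_abs_sq z zt hzt0]
  have h2 : 2 * (N : ℝ) * ‖P‖ ≤ 2 * (N : ℝ) * (s * ((N - 2).choose m : ℝ)) := by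
    rw [habs]
    calc _ ≤ 2 * (N : ℝ) * s * ((N - 2).choose m : ℝ) := hbound
      _ = 2 * (N : ℝ) * (s * ((N - 2).choose m : ℝ)) := by ring
  exact le_of_mul_le_mul_left h2 (by positivity)

lemma d_bound (z : Fin N → ℂ) (hz : ∀ j, ‖z j‖ ≤ 1) (zt : ℂ)
    (hzt0 : ∑ j : Fin N, (z j - zt) = 0) (m : ℕ) (hm : m + 2 ≤ N) :
    ‖Esym z univ (m + 2) / (N.choose (m + 2) : ℂ)
        - zt * (Esym z univ (m + 1) / (N.choose (m + 1) : ℂ))‖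
      ≤ (((m : ℝ) + 1) / ((N : ℝ) * ((N : ℝ) - 1)))
          * ∑ j : Fin N, ‖z j - zt‖ ^ 2 := by
  classical
  have hcard : (univ : Finset (Fin N)).card = N := by
    rw [Finset.card_univ, Fintype.card_fin]
  set s : ℝ := ∑ j : Fin N, ‖z j - zt‖ ^ 2 with hs
  set P : ℂ := ∑ j : Fin N, (z j - zt) * Esym z (univ.erase j) (m + 1) with hP
  have hm1 : m + 1 + 1 ≤ (univ : Finset (Fin N)).card := by omega
  have hsum1 := sum_z_Esym_erase z univ (m + 1) hm1
  have hsum2 := sum_Esym_erase z univ (m + 1)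
  rw [hcard] at hsum2
  have hP_eq : P = ((m + 2 : ℕ) : ℂ) * Esym z univ (m + 2)
      - zt * (((N - (m + 1) : ℕ) : ℂ) * Esym z univ (m + 1)) := by
    have : P = (∑ j : Fin N, z j * Esym z (univ.erase j) (m + 1))
        - zt * ∑ j : Fin N, Esym z (univ.erase j) (m + 1) := by
      rw [hP, Finset.mul_sum, ← Finset.sum_sub_distrib]
      exact Finset.sum_congr rfl fun j _ => by ring
    rw [this, hsum1, hsum2]
  have hc2 : 0 < N.choose (m + 2) := Nat.choose_pos hm
  have hc1 : 0 < N.choose (m + 1) := Nat.choose_pos (by omega)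
  have hc2' : ((N.choose (m + 2) : ℂ)) ≠ 0 := by exact_mod_cast hc2.ne'
  have hc1' : ((N.choose (m + 1) : ℂ)) ≠ 0 := by exact_mod_cast hc1.ne'
  have hcc : ((N.choose (m + 2) : ℂ)) * ((m + 2 : ℕ) : ℂ)
      = ((N.choose (m + 1) : ℂ)) * ((N - (m + 1) : ℕ) : ℂ) := by
    exact_mod_cast congrArg (Nat.cast : ℕ → ℂ) (Nat.choose_succ_right_eq N (m + 1))
  have hm2' : ((m + 2 : ℕ) : ℂ) ≠ 0 := by
    exact_mod_cast (Nat.succ_ne_zero (m + 1))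
  have hfrac : Esym z univ (m + 2) / (N.choose (m + 2) : ℂ)
      - zt * (Esym z univ (m + 1) / (N.choose (m + 1) : ℂ))
      = P / (((m + 2 : ℕ) : ℂ) * (N.choose (m + 2) : ℂ)) := by
    rw [hP_eq, eq_div_iff (mul_ne_zero hm2' hc2')]
    field_simp
    push_cast at hcc ⊢
    linear_combination (-(zt * Esym z univ (m + 1))) * hcc
  -- Nat identity  N(N-1) C(N-2,m) = (m+1)(m+2) C(N,m+2)
  have e1 : N - 1 + 1 = N := by omega
  have e2 : N - 2 + 1 = N - 1 := by omega
  have h1 := Nat.add_one_mul_choose_eq (N - 1) (m + 1)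
  have h2 := Nat.add_one_mul_choose_eq (N - 2) m
  rw [e1] at h1
  rw [e2] at h2
  have hNat : N * (N - 1) * ((N - 2).choose m)
      = (m + 1) * ((m + 2) * (N.choose (m + 2))) := by
    calc N * (N - 1) * ((N - 2).choose m) = N * ((N - 1) * ((N - 2).choose m)) := by ring
      _ = N * ((N - 1).choose (m + 1) * (m + 1)) := by rw [h2]
      _ = (N * (N - 1).choose (m + 1)) * (m + 1) := by ring
      _ = (N.choose (m + 2) * (m + 2)) * (m + 1) := by rw [h1]
      _ = (m + 1) * ((m + 2) * (N.choose (m + 2))) := by ring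
  have hreal : (N : ℝ) * ((N : ℝ) - 1) * (((N - 2).choose m : ℕ) : ℝ)
      = ((m : ℝ) + 1) * (((m + 2 : ℕ) : ℝ) * ((N.choose (m + 2) : ℕ) : ℝ)) := by
    have hN1 : ((N - 1 : ℕ) : ℝ) = (N : ℝ) - 1 := by
      rw [Nat.cast_sub (by omega : 1 ≤ N)]; norm_num
    rw [← hN1]
    exact_mod_cast congrArg (Nat.cast : ℕ → ℝ) hNat
  have hNN : (0 : ℝ) < (N : ℝ) * ((N : ℝ) - 1) := by
    have : (2 : ℝ) ≤ (N : ℝ) := by exact_mod_cast (by omega : 2 ≤ N)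
    nlinarith
  have hden : (0 : ℝ) < ((m + 2 : ℕ) : ℝ) * ((N.choose (m + 2) : ℕ) : ℝ) := by positivity
  have hkb := key_bound z hz zt hzt0 m hm
  calc ‖Esym z univ (m + 2) / (N.choose (m + 2) : ℂ)
        - zt * (Esym z univ (m + 1) / (N.choose (m + 1) : ℂ))‖
      = ‖P‖ / (((m + 2 : ℕ) : ℝ) * ((N.choose (m + 2) : ℕ) : ℝ)) := by
        rw [hfrac, norm_div, norm_mul, Complex.norm_natCast, Complex.norm_natCast]
    _ ≤ (s * (((N - 2).choose m : ℕ) : ℝ))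
          / (((m + 2 : ℕ) : ℝ) * ((N.choose (m + 2) : ℕ) : ℝ)) := by
        exact div_le_div_of_nonneg_right hkb hden.le |>.trans_eq rfl
    _ = (((m : ℝ) + 1) / ((N : ℝ) * ((N : ℝ) - 1))) * s := by
        have hrw : (((m : ℝ) + 1) / ((N : ℝ) * ((N : ℝ) - 1))) * s
            = (((m : ℝ) + 1) * s) / ((N : ℝ) * ((N : ℝ) - 1)) := by ring
        rw [hrw, div_eq_div_iff hden.ne' hNN.ne']
        linear_combination s * hreal
    _ = _ := by rw [hs]

/-- Corollary 15 (inequality (30)); the minimum with the convention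
`1/(n(1−|z̃|)) = ∞` for `|z̃| = 1` is expressed by the two conjuncts. -/
theorem stmt_14 (N n : ℕ) (hn : 2 ≤ n) (hnN : n ≤ N) (z : Fin N → ℂ)
    (hz : ∀ j, ‖z j‖ ≤ 1)
    (zt : ℂ) (hzt : zt = (1 / (N : ℂ)) * ∑ j : Fin N, z j) :
    ‖(∑ J ∈ (univ : Finset (Fin N)).powersetCard n, ∏ j ∈ J, z j) /
            (N.choose n : ℂ) - zt ^ n‖
      ≤ ((n : ℝ) * ((n : ℝ) - 1) / ((N : ℝ) * ((N : ℝ) - 1))) *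
          (∑ j : Fin N, ‖z j - zt‖ ^ 2) * (1 / 2) ∧
    (‖zt‖ < 1 →
      ‖(∑ J ∈ (univ : Finset (Fin N)).powersetCard n, ∏ j ∈ J, z j) /
              (N.choose n : ℂ) - zt ^ n‖
        ≤ ((n : ℝ) * ((n : ℝ) - 1) / ((N : ℝ) * ((N : ℝ) - 1))) *
            (∑ j : Fin N, ‖z j - zt‖ ^ 2) *
              (1 / ((n : ℝ) * (1 - ‖zt‖)))) := by
  classical
  have hN2 : 2 ≤ N := le_trans hn hnN
  have hNc : (N : ℂ) ≠ 0 := by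
    exact_mod_cast (by omega : N ≠ 0)
  have hzt0 : ∑ j : Fin N, (z j - zt) = 0 := by
    rw [Finset.sum_sub_distrib, Finset.sum_const, Finset.card_univ, Fintype.card_fin,
      nsmul_eq_mul, hzt]
    field_simp
    ring
  set t : ℝ := ‖zt‖ with ht
  set s : ℝ := ∑ j : Fin N, ‖z j - zt‖ ^ 2 with hs
  have hs0 : 0 ≤ s := Finset.sum_nonneg fun j _ => by positivity
  have ht0 : 0 ≤ t := norm_nonneg _
  have ht1 : t ≤ 1 := by
    rw [ht, hzt, norm_mul, norm_div, norm_one, Complex.norm_natCast]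
    rw [div_mul_eq_mul_div, one_mul, div_le_one (by positivity : (0:ℝ) < (N:ℝ))]
    calc ‖∑ j : Fin N, z j‖ ≤ ∑ j : Fin N, ‖z j‖ :=
          norm_sum_le _ _
      _ ≤ ∑ j : Fin N, (1 : ℝ) := Finset.sum_le_sum fun j _ => hz j
      _ = (N : ℝ) := by simp
  set e : ℕ → ℂ := fun k => Esym z univ k / (N.choose k : ℂ) with he
  have he0 : e 0 = 1 := by simp [he, Esym_zero]
  have he1 : e 1 = zt := by
    rw [he]
    simp only [Esym_one, Nat.choose_one_right]
    rw [hzt]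
    field_simp
  have hNN : (0 : ℝ) < (N : ℝ) * ((N : ℝ) - 1) := by
    have : (2 : ℝ) ≤ (N : ℝ) := by exact_mod_cast hN2
    nlinarith
  -- telescoping
  have htel : e n - zt ^ n = ∑ k ∈ range n, zt ^ (n - k - 1) * (e (k + 1) - zt * e k) := by
    have hfn : ∀ k < n, zt ^ (n - (k+1)) * e (k+1) - zt ^ (n - k) * e k
        = zt ^ (n - k - 1) * (e (k + 1) - zt * e k) := by
      intro k hk
      obtain ⟨a, ha⟩ : ∃ a, n - k = a + 1 := ⟨n - k - 1, by omega⟩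
      have h1 : n - (k + 1) = a := by omega
      have h2 : n - k - 1 = a := by omega
      rw [h1, h2, ha, pow_succ]
      ring
    calc e n - zt ^ n = (zt ^ (n - n) * e n) - (zt ^ (n - 0) * e 0) := by
          rw [Nat.sub_self, pow_zero, one_mul, Nat.sub_zero, he0, mul_one]
      _ = ∑ k ∈ range n, (zt ^ (n - (k+1)) * e (k+1) - zt ^ (n - k) * e k) :=
          (Finset.sum_range_sub (fun k => zt ^ (n - k) * e k) n).symm
      _ = _ := Finset.sum_congr rfl fun k hk => hfn k (Finset.mem_range.1 hk)
  -- termwise bound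
  have hterm : ∀ k ∈ range n, ‖zt ^ (n - k - 1) * (e (k + 1) - zt * e k)‖
      ≤ t ^ (n - k - 1) * ((k : ℝ) / ((N : ℝ) * ((N : ℝ) - 1)) * s) := by
    intro k hk
    rw [norm_mul, norm_pow]
    rcases Nat.eq_zero_or_pos k with rfl | hkpos
    · rw [he0, mul_one, he1, sub_self]
      simp
    · obtain ⟨j, rfl⟩ : ∃ j, k = j + 1 := ⟨k - 1, by omega⟩
      have hj2 : j + 2 ≤ N := by
        have := Finset.mem_range.1 hk; omega
      have := d_bound z hz zt hzt0 j hj2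
      refine mul_le_mul_of_nonneg_left ?_ (by positivity)
      calc ‖e (j + 1 + 1) - zt * e (j + 1)‖
          = ‖Esym z univ (j + 2) / (N.choose (j + 2) : ℂ)
              - zt * (Esym z univ (j + 1) / (N.choose (j + 1) : ℂ))‖ := rfl
        _ ≤ (((j : ℝ) + 1) / ((N : ℝ) * ((N : ℝ) - 1))) * s := this
        _ = ((j + 1 : ℕ) : ℝ) / ((N : ℝ) * ((N : ℝ) - 1)) * s := by push_cast; ring
  have hmain : ‖e n - zt ^ n‖
      ≤ ∑ k ∈ range n, t ^ (n - k - 1) * ((k : ℝ) / ((N : ℝ) * ((N : ℝ) - 1)) * s) := by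
    rw [htel]
    exact (norm_sum_le _ _).trans (Finset.sum_le_sum hterm)
  have hgoal_eq : (∑ J ∈ (univ : Finset (Fin N)).powersetCard n, ∏ j ∈ J, z j) /
      (N.choose n : ℂ) - zt ^ n = e n - zt ^ n := by
    rw [he]
    rfl
  constructor
  · -- branch 1
    rw [hgoal_eq]
    refine hmain.trans ?_
    have hsum1 : ∑ k ∈ range n, t ^ (n - k - 1) * ((k : ℝ) / ((N : ℝ) * ((N : ℝ) - 1)) * s)
        ≤ ∑ k ∈ range n, (k : ℝ) / ((N : ℝ) * ((N : ℝ) - 1)) * s := by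
      refine Finset.sum_le_sum fun k _ => ?_
      have hc : 0 ≤ (k : ℝ) / ((N : ℝ) * ((N : ℝ) - 1)) * s :=
        mul_nonneg (div_nonneg (Nat.cast_nonneg k) hNN.le) hs0
      exact mul_le_of_le_one_left hc (pow_le_one₀ ht0 ht1)
    refine hsum1.trans ?_
    have hgauss : ∑ k ∈ range n, (k : ℝ) = (n : ℝ) * ((n : ℝ) - 1) / 2 := by
      have h := Finset.sum_range_id_mul_two n
      have h' : ((∑ i ∈ range n, i : ℕ) : ℝ) * 2 = (n : ℝ) * ((n - 1 : ℕ) : ℝ) := by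
        exact_mod_cast congrArg (Nat.cast : ℕ → ℝ) h
      have hn1 : ((n - 1 : ℕ) : ℝ) = (n : ℝ) - 1 := by
        rw [Nat.cast_sub (by omega : 1 ≤ n)]; norm_num
      rw [hn1] at h'
      push_cast at h'
      linarith
    rw [← Finset.sum_mul, ← Finset.sum_div, hgauss]
    rw [hs]
    exact le_of_eq (by ring)
  · -- branch 2
    intro htlt
    rw [hgoal_eq]
    refine hmain.trans ?_
    have h1t : (0 : ℝ) < 1 - t := by linarith
    have hgeom : ∑ k ∈ range n, t ^ k ≤ 1 / (1 - t) := by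
      rw [le_div_iff₀ h1t]
      have := geom_sum_mul t n
      have h2 : (∑ i ∈ range n, t ^ i) * (1 - t) = 1 - t ^ n := by
        linear_combination -this
      rw [h2]
      have : 0 ≤ t ^ n := by positivity
      linarith
    have hsum2 : ∑ k ∈ range n, t ^ (n - k - 1) * ((k : ℝ) / ((N : ℝ) * ((N : ℝ) - 1)) * s)
        ≤ ((n : ℝ) - 1) * (1 / (1 - t)) * (s / ((N : ℝ) * ((N : ℝ) - 1))) := by
      have step : ∀ k ∈ range n, t ^ (n - k - 1) * ((k : ℝ) / ((N : ℝ) * ((N : ℝ) - 1)) * s)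
          ≤ (((n : ℝ) - 1) * (s / ((N : ℝ) * ((N : ℝ) - 1)))) * t ^ (n - k - 1) := by
        intro k hk
        have hkn : (k : ℝ) ≤ (n : ℝ) - 1 := by
          have := Finset.mem_range.1 hk
          have : (k : ℝ) ≤ ((n - 1 : ℕ) : ℝ) := by exact_mod_cast (by omega : k ≤ n - 1)
          rw [Nat.cast_sub (by omega : 1 ≤ n)] at this
          push_cast at this
          linarith
        have htp : (0 : ℝ) ≤ t ^ (n - k - 1) := pow_nonneg ht0 _
        have hss : (0 : ℝ) ≤ s / ((N : ℝ) * ((N : ℝ) - 1)) := div_nonneg hs0 hNN.le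
        have : (k : ℝ) / ((N : ℝ) * ((N : ℝ) - 1)) * s
            ≤ ((n : ℝ) - 1) * (s / ((N : ℝ) * ((N : ℝ) - 1))) := by
          rw [div_mul_eq_mul_div, mul_div_assoc]
          exact mul_le_mul_of_nonneg_right hkn hss
        calc t ^ (n - k - 1) * ((k : ℝ) / ((N : ℝ) * ((N : ℝ) - 1)) * s)
            ≤ t ^ (n - k - 1) * (((n : ℝ) - 1) * (s / ((N : ℝ) * ((N : ℝ) - 1)))) :=
              mul_le_mul_of_nonneg_left this htp
          _ = (((n : ℝ) - 1) * (s / ((N : ℝ) * ((N : ℝ) - 1)))) * t ^ (n - k - 1) := by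
              ring
      refine (Finset.sum_le_sum step).trans ?_
      rw [← Finset.mul_sum]
      have hrefl : ∑ k ∈ range n, t ^ (n - k - 1) = ∑ k ∈ range n, t ^ k := by
        have h := Finset.sum_range_reflect (fun i => t ^ i) n
        have h2 : ∀ k ∈ range n, t ^ (n - k - 1) = t ^ (n - 1 - k) := by
          intro k hk
          congr 1
          omega
        rw [Finset.sum_congr rfl h2]
        exact h
      rw [hrefl]
      calc (((n : ℝ) - 1) * (s / ((N : ℝ) * ((N : ℝ) - 1)))) * ∑ k ∈ range n, t ^ k
          ≤ (((n : ℝ) - 1) * (s / ((N : ℝ) * ((N : ℝ) - 1)))) * (1 / (1 - t)) := by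
            refine mul_le_mul_of_nonneg_left hgeom ?_
            have hn1 : (0 : ℝ) ≤ (n : ℝ) - 1 := by
              have : (1 : ℝ) ≤ (n : ℝ) := by exact_mod_cast (by omega : 1 ≤ n)
              linarith
            exact mul_nonneg hn1 (div_nonneg hs0 hNN.le)
        _ = ((n : ℝ) - 1) * (1 / (1 - t)) * (s / ((N : ℝ) * ((N : ℝ) - 1))) := by ring
    refine hsum2.trans_eq ?_
    have hnne : (n : ℝ) ≠ 0 := by exact_mod_cast (by omega : n ≠ 0)
    rw [hs]
    field_simp
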